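/- Suppose each zero-superlevel set S_i := {x : b_i(x) ≥ 0} satisfies S_i ⊆ S_u(t) for all t in [iT, (i+N+1)T]. Then for every k ∈ ℕ and every t ∈ [kT, (k+1)T], the set S_ψ(t) := {x : ψ₀(t,x) ≥ 0}, where ψ₀ is the time-varying soft-maximum composition of b_{k−N},...,b_k (as defined below), satisfies S_ψ(t) ⊆ ∪_{i=k−N}^{k} S_i ⊆ S_u(t). -/

import Mathlib

/-!
If every argument of the soft maximum is negative, each exponential is below `1`, so the
normalized log-sum-exp is negative. The one blended argument is a convex combination of `b_k` and
`b_{k-N}`, so a nonnegative argument means some `b_{k-j}`, `j ≤ N`, is nonnegative at `x`. Each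
safety window `[(k-j)T, (k-j+N+1)T]` contains `[kT, (k+1)T]`.
-/

open Real Finset

/-- The `N` arguments of the time-varying soft-maximum composition on `[kT,(k+1)T)`:
`b_{k-1}(x), ..., b_{k-N+1}(x)` together with the convex combination
`η(t/T-k) b_k(x) + (1-η(t/T-k)) b_{k-N}(x)`.  Here `b : ℕ → _` with natural-number
(truncated) subtraction realizing the convention `b_{-i} := b_0`. -/
noncomputable def psiArgs (n N : ℕ) (T : ℝ) (η : ℝ → ℝ) (b : ℕ → (Fin n → ℝ) → ℝ)
    (k : ℕ) (t : ℝ) (x : Fin n → ℝ) : Fin N → ℝ :=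
  fun i => if (i : ℕ) + 1 < N then b (k - 1 - i) x
    else η (t / T - k) * b k x + (1 - η (t / T - k)) * b (k - N) x

/-- The soft maximum `softmax_κ`, normalized by `log |ι| / κ` so that its zero superlevel set
lies inside the union of those of its arguments. -/
noncomputable def softmax {ι : Type*} [Fintype ι] (κ : ℝ) (z : ι → ℝ) : ℝ :=
  (1 / κ) * Real.log (∑ i, Real.exp (κ * z i)) - Real.log (Fintype.card ι) / κ

theorem softmax_neg_of_forall_neg {ι : Type*} [Fintype ι] [Nonempty ι] {κ : ℝ} (hκ : 0 < κ)
    {z : ι → ℝ} (hz : ∀ i, z i < 0) : softmax κ z < 0 := by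
  have hsum : ∑ i, Real.exp (κ * z i) < Fintype.card ι := by
    calc ∑ i, Real.exp (κ * z i) < ∑ _i : ι, (1 : ℝ) :=
          Finset.sum_lt_sum_of_nonempty univ_nonempty fun i _ =>
            Real.exp_lt_one_iff.mpr (mul_neg_of_pos_of_neg hκ (hz i))
      _ = Fintype.card ι := by simp
  have hlog : Real.log (∑ i, Real.exp (κ * z i)) < Real.log (Fintype.card ι) :=
    Real.log_lt_log (Finset.sum_pos (fun i _ => Real.exp_pos _) univ_nonempty) hsum
  have hsoftmax : softmax κ z
      = (Real.log (∑ i, Real.exp (κ * z i)) - Real.log (Fintype.card ι)) / κ := by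
    unfold softmax; ring
  rw [hsoftmax]
  exact div_neg_of_neg_of_pos (sub_neg.mpr hlog) hκ

theorem exists_nonneg_of_softmax_nonneg {ι : Type*} [Fintype ι] [Nonempty ι] {κ : ℝ}
    (hκ : 0 < κ) {z : ι → ℝ} (h : 0 ≤ softmax κ z) : ∃ i, 0 ≤ z i := by
  by_contra! hz
  exact (softmax_neg_of_forall_neg hκ hz).not_ge h

theorem nonneg_or_nonneg_of_convex_comb_nonneg {a u v : ℝ} (ha₀ : 0 ≤ a) (ha₁ : a ≤ 1)
    (h : 0 ≤ a * u + (1 - a) * v) : 0 ≤ u ∨ 0 ≤ v := by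
  by_contra! huv
  nlinarith [mul_nonneg ha₀ (neg_nonneg.mpr huv.1.le),
    mul_nonneg (sub_nonneg.mpr ha₁) (neg_nonneg.mpr huv.2.le)]

theorem exists_nonneg_of_psiArgs_nonneg {n N : ℕ} {T : ℝ} {η : ℝ → ℝ}
    (hη01 : ∀ s, 0 ≤ η s ∧ η s ≤ 1) {b : ℕ → (Fin n → ℝ) → ℝ} {k : ℕ} {t : ℝ}
    {x : Fin n → ℝ} {i : Fin N} (hi : 0 ≤ psiArgs n N T η b k t x i) :
    ∃ j ≤ N, 0 ≤ b (k - j) x := by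
  unfold psiArgs at hi
  split_ifs at hi with hlast
  · exact ⟨i + 1, hlast.le, by rwa [Nat.sub_sub, add_comm] at hi⟩
  · obtain ⟨hη₀, hη₁⟩ := hη01 (t / T - k)
    rcases nonneg_or_nonneg_of_convex_comb_nonneg hη₀ hη₁ hi with hk | hkN
    · exact ⟨0, Nat.zero_le N, hk⟩
    · exact ⟨N, le_rfl, hkN⟩

/-- For `j > k` the truncated subtraction gives `k - j = 0`, realizing `b_{-i} := b_0`; the window
`[0, (N+1)T]` still covers `[kT, (k+1)T]`. -/
theorem mem_safety_window {N k j : ℕ} (hj : j ≤ N) {T t : ℝ} (hT : 0 ≤ T)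
    (hkt : (k : ℝ) * T ≤ t) (htk : t ≤ ((k : ℝ) + 1) * T) :
    ((k - j : ℕ) : ℝ) * T ≤ t ∧ t ≤ (((k - j : ℕ) : ℝ) + N + 1) * T := by
  have hlow : ((k - j : ℕ) : ℝ) ≤ k := by exact_mod_cast Nat.sub_le k j
  have hhigh : (k : ℝ) ≤ ((k - j : ℕ) : ℝ) + N := by exact_mod_cast (by omega : k ≤ k - j + N)
  constructor
  · nlinarith
  · nlinarith

theorem time_varying_softmax_safe_general (n N : ℕ) (hN : 0 < N) (T κ : ℝ) (hκ : 0 < κ)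
    (b : ℕ → (Fin n → ℝ) → ℝ)
    (Su : ℝ → Set (Fin n → ℝ))
    (η : ℝ → ℝ) (hη01 : ∀ s, 0 ≤ η s ∧ η s ≤ 1)
    (hsafe : ∀ i : ℕ, ∀ t : ℝ, (i : ℝ) * T ≤ t → t ≤ ((i : ℝ) + N + 1) * T →
      ∀ x, 0 ≤ b i x → x ∈ Su t) :
    ∀ k : ℕ, ∀ t : ℝ, (k : ℝ) * T ≤ t → t ≤ ((k : ℝ) + 1) * T → ∀ x : Fin n → ℝ,
      (0 ≤ (1 / κ) * Real.log (∑ i, Real.exp (κ * psiArgs n N T η b k t x i)) - Real.log N / κ →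
        (∃ j ≤ N, 0 ≤ b (k - j) x)) ∧
      (∀ y : Fin n → ℝ, (∃ j ≤ N, 0 ≤ b (k - j) y) → y ∈ Su t) := by
  intro k t hkt htk x
  have : Nonempty (Fin N) := ⟨⟨0, hN⟩⟩
  refine ⟨fun hψ => ?_, ?_⟩
  · have hψ' : 0 ≤ softmax κ (psiArgs n N T η b k t x) := by
      rwa [softmax, Fintype.card_fin]
    obtain ⟨i, hi⟩ := exists_nonneg_of_softmax_nonneg hκ hψ'
    exact exists_nonneg_of_psiArgs_nonneg hη01 hi
  · rintro y ⟨j, hj, hby⟩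
    have hT : 0 ≤ T := by linarith
    obtain ⟨hlow, hhigh⟩ := mem_safety_window hj hT hkt htk
    exact hsafe (k - j) t hlow hhigh y hby

theorem time_varying_softmax_safe (n N : ℕ) (hN : 0 < N) (T κ : ℝ) (hT : 0 < T) (hκ : 0 < κ)
    (b : ℕ → (Fin n → ℝ) → ℝ) (hb : ∀ i, Continuous (b i))
    (Su : ℝ → Set (Fin n → ℝ))
    (η : ℝ → ℝ) (hη01 : ∀ s, 0 ≤ η s ∧ η s ≤ 1)
    (hη0 : ∀ s ≤ (0 : ℝ), η s = 0) (hη1 : ∀ s, (1 : ℝ) ≤ s → η s = 1)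
    (hsafe : ∀ i : ℕ, ∀ t : ℝ, (i : ℝ) * T ≤ t → t ≤ ((i : ℝ) + N + 1) * T →
      ∀ x, 0 ≤ b i x → x ∈ Su t) :
    ∀ k : ℕ, ∀ t : ℝ, (k : ℝ) * T ≤ t → t ≤ ((k : ℝ) + 1) * T → ∀ x : Fin n → ℝ,
      (0 ≤ (1 / κ) * Real.log (∑ i, Real.exp (κ * psiArgs n N T η b k t x i)) - Real.log N / κ →
        (∃ j ≤ N, 0 ≤ b (k - j) x)) ∧
      (∀ y : Fin n → ℝ, (∃ j ≤ N, 0 ≤ b (k - j) y) → y ∈ Su t) :=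
  time_varying_softmax_safe_general n N hN T κ hκ b Su η hη01 hsafe
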